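/- arXiv:1711.00186 — 5 statements merged into one kernel-verified Lean document; each statement's English description precedes it below -/
import Mathlib

section
/- Let A be an infinite set of natural numbers, let n₀ be such that r(A, n) ≠ 1 for all integers n ≥ n₀, and let a₀ ∈ A with a₀ ≥ n₀. Then for every real number t ≥ a₀, the interval (t, 2t] contains an element of A. -/
/-- For a set `A` of natural numbers, `r A n` is the number of solutions of
`n = a + b` with `a, b ∈ A`, `a ≤ b`. -/
noncomputable def addRep (A : Set ℕ) (n : ℕ) : ℕ :=
  Set.ncard {p : ℕ × ℕ | p.1 ∈ A ∧ p.2 ∈ A ∧ p.1 ≤ p.2 ∧ p.1 + p.2 = n}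

/-! Take `a` the largest element of `A` below `t`. Since `2a = a + a` is one representation of
`2a` and `r(A, 2a) ≠ 1`, there is another one `2a = b + c` with `b < a < c`; maximality of `a`
forces `c > t`, while `c ≤ 2a ≤ 2t`. -/

theorem exists_mem_Ioc_two_mul_of_addRep_ne_one {A : Set ℕ} {a : ℕ} (ha : a ∈ A)
    (hrep : addRep A (2 * a) ≠ 1) : ∃ c ∈ A, a < c ∧ c ≤ 2 * a := by
  obtain ⟨⟨b, c⟩, ⟨-, hc, hbc, hsum⟩, hne⟩ :
      ∃ p ∈ {p : ℕ × ℕ | p.1 ∈ A ∧ p.2 ∈ A ∧ p.1 ≤ p.2 ∧ p.1 + p.2 = 2 * a}, p ≠ (a, a) := by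
    by_contra! honly
    exact hrep <| Set.ncard_eq_one.mpr
      ⟨(a, a), Set.eq_singleton_iff_unique_mem.mpr ⟨⟨ha, ha, le_rfl, by ring⟩, honly⟩⟩
  refine ⟨c, hc, ?_, by omega⟩
  by_contra! hca
  exact hne (Prod.ext (by omega) (by omega))

theorem exists_mem_Ioc_two_mul_of_le {A : Set ℕ} {n₀ a₀ m : ℕ}
    (hr : ∀ n : ℕ, n₀ ≤ n → addRep A n ≠ 1) (ha₀ : a₀ ∈ A) (ha₀n₀ : n₀ ≤ a₀) (hm : a₀ ≤ m) :
    ∃ c ∈ A, m < c ∧ c ≤ 2 * m := by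
  classical
  obtain ⟨a, ha, ha₀a, ham, hgreatest⟩ :
      ∃ a ∈ A, a₀ ≤ a ∧ a ≤ m ∧ ∀ c, a < c → c ≤ m → c ∉ A :=
    ⟨_, Nat.findGreatest_spec hm ha₀, Nat.le_findGreatest hm ha₀, Nat.findGreatest_le m,
      fun _ => Nat.findGreatest_is_greatest⟩
  obtain ⟨c, hc, hac, hca⟩ := exists_mem_Ioc_two_mul_of_addRep_ne_one ha (hr _ (by omega))
  refine ⟨c, hc, ?_, by omega⟩
  by_contra! hcm
  exact hgreatest c hac hcm hc

theorem stmt_1_general (A : Set ℕ) (n₀ : ℕ)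
    (hr : ∀ n : ℕ, n₀ ≤ n → addRep A n ≠ 1)
    (a₀ : ℕ) (ha₀ : a₀ ∈ A) (ha₀n₀ : n₀ ≤ a₀) :
    ∀ t : ℝ, (a₀ : ℝ) ≤ t → ∃ a ∈ A, t < (a : ℝ) ∧ (a : ℝ) ≤ 2 * t := by
  intro t ht
  have ht₀ : 0 ≤ t := (Nat.cast_nonneg a₀).trans ht
  obtain ⟨c, hc, hmc, hcm⟩ :=
    exists_mem_Ioc_two_mul_of_le hr ha₀ ha₀n₀ (Nat.le_floor ht)
  refine ⟨c, hc, (Nat.floor_lt ht₀).mp hmc, ?_⟩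
  calc (c : ℝ) ≤ 2 * ⌊t⌋₊ := by exact_mod_cast hcm
    _ ≤ 2 * t := by gcongr; exact Nat.floor_le ht₀

theorem stmt_1 (A : Set ℕ) (hA : A.Infinite) (n₀ : ℕ)
    (hr : ∀ n : ℕ, n₀ ≤ n → addRep A n ≠ 1)
    (a₀ : ℕ) (ha₀ : a₀ ∈ A) (ha₀n₀ : n₀ ≤ a₀) :
    ∀ t : ℝ, (a₀ : ℝ) ≤ t → ∃ a ∈ A, t < (a : ℝ) ∧ (a : ℝ) ≤ 2 * t :=
  stmt_1_general A n₀ hr a₀ ha₀ ha₀n₀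
end

section
/- Let A be an infinite set of natural numbers, let n₀ be such that r(A, n) ≠ 1 for all integers n ≥ n₀, and let a₀ ∈ A with a₀ ≥ n₀. Then for all sufficiently large real x the following holds: if |A(x)| ≤ (log x / log log x)² and b is a natural number with a₀ ≤ b ≤ x/(log x)², then there exists a ∈ A with a > 3b and a + b < x such that the interval [a − b, a) contains no element of A and the number of elements of A in the interval (b, a + b] is at least (a + b)/(2b) − 1. -/
set_option maxHeartbeats 2000000


/-- For real `x`, the number of elements of `A` that are `≤ x`. -/
noncomputable def countLe (A : Set ℕ) (x : ℝ) : ℕ :=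
  Set.ncard {a : ℕ | a ∈ A ∧ (a : ℝ) ≤ x}

/-- From a representation function value `≠ 1`, each element `v ≥ n₀` of `A`
has a successor in `(v, 2v]`. -/
lemma next_elt {A : Set ℕ} {n₀ : ℕ} (hr : ∀ n : ℕ, n₀ ≤ n → addRep A n ≠ 1)
    {v : ℕ} (hv : v ∈ A) (hvn : n₀ ≤ v) : ∃ w ∈ A, v < w ∧ w ≤ 2 * v := by
  have hTfin : {p : ℕ × ℕ | p.1 ∈ A ∧ p.2 ∈ A ∧ p.1 ≤ p.2 ∧ p.1 + p.2 = 2 * v}.Finite := by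
    apply ((Set.finite_Iic (2 * v)).prod (Set.finite_Iic (2 * v))).subset
    rintro ⟨u, w⟩ ⟨_, _, _, h4⟩
    simp only [Set.mem_prod, Set.mem_Iic]
    omega
  have hmem : ((v, v) : ℕ × ℕ) ∈ {p : ℕ × ℕ | p.1 ∈ A ∧ p.2 ∈ A ∧ p.1 ≤ p.2 ∧ p.1 + p.2 = 2 * v} :=
    ⟨hv, hv, le_refl _, by ring⟩
  have h1 : 0 < Set.ncard {p : ℕ × ℕ | p.1 ∈ A ∧ p.2 ∈ A ∧ p.1 ≤ p.2 ∧ p.1 + p.2 = 2 * v} :=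
    (Set.ncard_pos hTfin).mpr ⟨_, hmem⟩
  have h2 : 1 < Set.ncard {p : ℕ × ℕ | p.1 ∈ A ∧ p.2 ∈ A ∧ p.1 ≤ p.2 ∧ p.1 + p.2 = 2 * v} := by
    have hne := hr (2 * v) (by omega)
    have : addRep A (2 * v) =
        Set.ncard {p : ℕ × ℕ | p.1 ∈ A ∧ p.2 ∈ A ∧ p.1 ≤ p.2 ∧ p.1 + p.2 = 2 * v} := rfl
    omega
  obtain ⟨⟨u, w⟩, hq, hne⟩ := Set.exists_ne_of_one_lt_ncard h2 (v, v)
  obtain ⟨huA, hwA, huw, hsum⟩ := hq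
  have hvw : v < w := by
    rcases lt_or_ge v w with h | h
    · exact h
    · exfalso
      have : u = v ∧ w = v := by omega
      exact hne (by rw [Prod.ext_iff]; exact ⟨this.1, this.2⟩)
  exact ⟨w, hwA, hvw, by omega⟩

/-- maximum of a finite nonempty set of naturals -/
lemma set_max {B : Set ℕ} (hfin : B.Finite) (hne : B.Nonempty) :
    ∃ m ∈ B, ∀ c ∈ B, c ≤ m := by
  classical
  have h1 : hfin.toFinset.Nonempty := by rwa [Set.Finite.toFinset_nonempty]
  refine ⟨hfin.toFinset.max' h1, ?_, ?_⟩
  · have := hfin.toFinset.max'_mem h1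
    rwa [Set.Finite.mem_toFinset] at this
  · intro c hc
    exact hfin.toFinset.le_max' c (hfin.mem_toFinset.mpr hc)

/-- Density: `A` meets `(m, 2m]` for every `m ≥ a₀`. -/
lemma density {A : Set ℕ} {n₀ a₀ : ℕ} (hr : ∀ n : ℕ, n₀ ≤ n → addRep A n ≠ 1)
    (ha₀ : a₀ ∈ A) (ha₀n₀ : n₀ ≤ a₀) :
    ∀ m : ℕ, a₀ ≤ m → ∃ c ∈ A, m < c ∧ c ≤ 2 * m := by
  intro m hm
  have hBfin : {c : ℕ | c ∈ A ∧ c ≤ m}.Finite :=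
    (Set.finite_Iic m).subset fun c hc => hc.2
  obtain ⟨v, hvB, hvmax⟩ := set_max hBfin ⟨a₀, ha₀, hm⟩
  obtain ⟨hvA, hvm⟩ := hvB
  have hva₀ : a₀ ≤ v := hvmax a₀ ⟨ha₀, hm⟩
  obtain ⟨w, hwA, hvw, hw2⟩ := next_elt hr hvA (le_trans ha₀n₀ hva₀)
  refine ⟨w, hwA, ?_, by omega⟩
  by_contra hcon
  push_neg at hcon
  have := hvmax w ⟨hwA, hcon⟩
  omega

/-- Chain lemma: walking down by steps of size at most `b` from `top`. -/
lemma chain {A : Set ℕ} {b : ℕ} (top : ℕ) (htop : top ∈ A)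
    (step : ∀ c ∈ A, 3 * b < c → c ≤ top → ∃ d ∈ A, c - b ≤ d ∧ d < c) :
    ∀ j : ℕ, 3 * b + j * b < top →
      ∃ e ∈ A, e ≤ top ∧ top ≤ e + j * b ∧
        j + 1 ≤ Set.ncard {c : ℕ | c ∈ A ∧ e ≤ c ∧ c ≤ top} := by
  intro j
  induction j with
  | zero =>
    intro _
    refine ⟨top, htop, le_refl _, by omega, ?_⟩
    have hfin : {c : ℕ | c ∈ A ∧ top ≤ c ∧ c ≤ top}.Finite :=
      (Set.finite_Iic top).subset fun c hc => hc.2.2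
    have hpos : 0 < Set.ncard {c : ℕ | c ∈ A ∧ top ≤ c ∧ c ≤ top} :=
      (Set.ncard_pos hfin).mpr ⟨top, htop, le_refl _, le_refl _⟩
    omega
  | succ j ih =>
    intro h
    have hmul : (j + 1) * b = j * b + b := by ring
    rw [hmul] at h ⊢
    obtain ⟨K, hK⟩ : ∃ K, j * b = K := ⟨_, rfl⟩
    rw [hK] at h ⊢
    have hjh : 3 * b + j * b < top := by rw [hK]; omega
    obtain ⟨e, heA, hetop, htope, hcard⟩ := ih hjh
    rw [hK] at htope
    have he3 : 3 * b < e := by omega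
    obtain ⟨d, hdA, hde, hdlt⟩ := step e heA he3 hetop
    have hdb : e ≤ d + b := by omega
    refine ⟨d, hdA, by omega, by omega, ?_⟩
    have hfin : {c : ℕ | c ∈ A ∧ d ≤ c ∧ c ≤ top}.Finite :=
      (Set.finite_Iic top).subset fun c hc => hc.2.2
    have hfin2 : {c : ℕ | c ∈ A ∧ e ≤ c ∧ c ≤ top}.Finite :=
      (Set.finite_Iic top).subset fun c hc => hc.2.2
    have hsub : insert d {c : ℕ | c ∈ A ∧ e ≤ c ∧ c ≤ top} ⊆
        {c : ℕ | c ∈ A ∧ d ≤ c ∧ c ≤ top} := by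
      rintro c (rfl | hc)
      · exact ⟨hdA, le_refl _, by omega⟩
      · exact ⟨hc.1, by have := hc.2.1; omega, hc.2.2⟩
    have hdnot : d ∉ {c : ℕ | c ∈ A ∧ e ≤ c ∧ c ≤ top} := by
      intro hc
      have := hc.2.1
      omega
    have h1 : Set.ncard (insert d {c : ℕ | c ∈ A ∧ e ≤ c ∧ c ≤ top}) =
        Set.ncard {c : ℕ | c ∈ A ∧ e ≤ c ∧ c ≤ top} + 1 :=
      Set.ncard_insert_of_notMem hdnot hfin2
    have h2 := Set.ncard_le_ncard hsub hfin
    omega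

lemma exists_j {b p : ℕ} (hb : 1 ≤ b) (hp : 3 * b < p) :
    ∃ j K : ℕ, j * b = K ∧ 3 * b + K < p ∧ p ≤ K + 4 * b := by
  refine ⟨(p - (3 * b + 1)) / b, (p - (3 * b + 1)) / b * b, rfl, ?_, ?_⟩ <;>
  · have h1 := Nat.div_add_mod (p - (3 * b + 1)) b
    have h2 : (p - (3 * b + 1)) % b < b := Nat.mod_lt _ (by omega)
    obtain ⟨K, hK⟩ : ∃ K, (p - (3 * b + 1)) / b * b = K := ⟨_, rfl⟩
    obtain ⟨R, hR⟩ : ∃ R, (p - (3 * b + 1)) % b = R := ⟨_, rfl⟩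
    rw [mul_comm] at h1
    rw [hK] at h1 ⊢
    rw [hR] at h1 h2
    omega

theorem stmt_2 (A : Set ℕ) (hA : A.Infinite) (n₀ : ℕ)
    (hr : ∀ n : ℕ, n₀ ≤ n → addRep A n ≠ 1)
    (a₀ : ℕ) (ha₀ : a₀ ∈ A) (ha₀n₀ : n₀ ≤ a₀) :
    ∃ x₀ : ℝ, ∀ x : ℝ, x₀ ≤ x →
      (countLe A x : ℝ) ≤ (Real.log x / Real.log (Real.log x)) ^ 2 →
      ∀ b : ℕ, a₀ ≤ b → (b : ℝ) ≤ x / (Real.log x) ^ 2 →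
        ∃ a ∈ A, 3 * b < a ∧ ((a : ℝ) + b < x) ∧
          (∀ c ∈ A, a - b ≤ c → c < a → False) ∧
          ((a : ℝ) + b) / (2 * b) - 1 ≤
            (Set.ncard {c : ℕ | c ∈ A ∧ b < c ∧ c ≤ a + b} : ℝ) := by
  classical
  -- First: a₀ ≥ 1 (else addRep A 0 = 1 contradicts hr).
  have ha₀pos : 1 ≤ a₀ := by
    by_contra hcon
    have ha0 : a₀ = 0 := by omega
    have hn0 : n₀ = 0 := by omega
    have h0A : (0 : ℕ) ∈ A := ha0 ▸ ha₀
    have hset : {p : ℕ × ℕ | p.1 ∈ A ∧ p.2 ∈ A ∧ p.1 ≤ p.2 ∧ p.1 + p.2 = 0} =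
        {((0 : ℕ), (0 : ℕ))} := by
      ext ⟨u, w⟩
      simp only [Set.mem_setOf_eq, Set.mem_singleton_iff, Prod.ext_iff]
      constructor
      · rintro ⟨_, _, _, h⟩; omega
      · rintro ⟨hu, hw⟩; subst hu; subst hw; exact ⟨h0A, h0A, le_refl _, rfl⟩
    have : addRep A 0 = 1 := by
      unfold addRep
      rw [hset, Set.ncard_singleton]
    exact hr 0 (by omega) this
  have hdens := density hr ha₀ ha₀n₀
  refine ⟨Real.exp (Real.exp 2), ?_⟩
  intro x hx hcount b hab hbx
  set ℓ : ℝ := Real.log x with hℓdef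
  set lam : ℝ := Real.log ℓ with hlamdef
  set L : ℝ := (ℓ / lam) ^ 2 with hLdef
  have hx0 : (0 : ℝ) < x := lt_of_lt_of_le (Real.exp_pos _) hx
  have hlogx : Real.exp 2 ≤ ℓ := by
    have := Real.log_le_log (Real.exp_pos _) hx
    rwa [Real.log_exp] at this
  have hexp2 : (7 : ℝ) < Real.exp 2 := by
    have h := Real.exp_one_gt_d9
    have h2 : Real.exp 1 * Real.exp 1 = Real.exp 2 := by
      rw [← Real.exp_add]; norm_num
    nlinarith
  have hℓ7 : (7 : ℝ) < ℓ := lt_of_lt_of_le hexp2 hlogx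
  have hℓpos : (0 : ℝ) < ℓ := by linarith
  have hlam : (2 : ℝ) ≤ lam := by
    have := Real.log_le_log (Real.exp_pos 2) hlogx
    rwa [Real.log_exp] at this
  have hlampos : (0 : ℝ) < lam := by linarith
  have hLpos : (0 : ℝ) ≤ L := sq_nonneg _
  have hx8 : (8 : ℝ) ≤ x := by
    have h1 : (7 : ℝ) + 1 ≤ Real.exp 7 := Real.add_one_le_exp 7
    have h2 : Real.exp 7 ≤ Real.exp (Real.exp 2) := Real.exp_le_exp.mpr (by linarith)
    linarith
  have hb1 : 1 ≤ b := le_trans ha₀pos hab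
  have hbRpos : (0 : ℝ) < (b : ℝ) := by exact_mod_cast hb1
  have hℓsq : (49 : ℝ) ≤ ℓ ^ 2 := by nlinarith
  have hbR : (b : ℝ) ≤ x / 49 := by
    refine le_trans hbx ?_
    exact div_le_div_of_nonneg_left hx0.le (by norm_num) hℓsq
  -- existence of a "good" element
  have hex : ∃ c, c ∈ A ∧ 3 * b < c ∧ (c : ℝ) + b < x ∧
      (∀ d ∈ A, c - b ≤ d → d < c → False) := by
    by_contra hcon
    set m' : ℕ := Nat.floor (x / 3) with hm'def
    have hm'a₀ : a₀ ≤ m' := by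
      apply Nat.le_floor
      have : (a₀ : ℝ) ≤ (b : ℝ) := by exact_mod_cast hab
      have hx49 : x / 49 ≤ x / 3 := by
        apply div_le_div_of_nonneg_left hx0.le <;> norm_num
      linarith
    obtain ⟨cs, hcsA, hcs1, hcs2⟩ := hdens m' hm'a₀
    have hm'le : (m' : ℝ) ≤ x / 3 := Nat.floor_le (by positivity)
    have hcsle : (cs : ℝ) ≤ 2 * (x / 3) := by
      have : (cs : ℝ) ≤ ((2 * m' : ℕ) : ℝ) := by exact_mod_cast hcs2
      push_cast at this
      linarith
    have hcsx : (cs : ℝ) + b < x := by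
      have : (b : ℝ) ≤ x / 49 := hbR
      nlinarith
    have step : ∀ c ∈ A, 3 * b < c → c ≤ cs → ∃ d ∈ A, c - b ≤ d ∧ d < c := by
      intro c hcA h3 hccs
      by_contra hstep
      push_neg at hstep
      refine hcon ⟨c, hcA, h3, ?_, fun d hd h1 h2 => by have := hstep d hd h1; omega⟩
      have : (c : ℝ) ≤ (cs : ℝ) := by exact_mod_cast hccs
      linarith
    set J : ℕ := Nat.ceil L with hJdef
    have hJL : (J : ℝ) < L + 1 := Nat.ceil_lt_add_one hLpos
    have hLJ : L ≤ (J : ℝ) := Nat.le_ceil L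
    -- (3 + J) * b < cs
    have hcsgt : x / 3 < (cs : ℝ) := by
      have h1 : x / 3 < (m' : ℝ) + 1 := Nat.lt_floor_add_one (x / 3)
      have h2 : (m' : ℝ) + 1 ≤ (cs : ℝ) := by exact_mod_cast hcs1
      linarith
    have hLxℓ : L * (x / ℓ ^ 2) = x / lam ^ 2 := by
      rw [hLdef]
      field_simp
    have hxlam : x / lam ^ 2 ≤ x / 4 := by
      apply div_le_div_of_nonneg_left hx0.le (by norm_num)
      nlinarith
    have hkey : ((3 * b + J * b : ℕ) : ℝ) < (cs : ℝ) := by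
      push_cast
      have h1 : (3 + (J : ℝ)) * b ≤ (4 + L) * b := by nlinarith
      have h2 : (4 + L) * (b : ℝ) ≤ (4 + L) * (x / ℓ ^ 2) := by
        apply mul_le_mul_of_nonneg_left hbx (by linarith)
      have h3 : (4 + L) * (x / ℓ ^ 2) = 4 * (x / ℓ ^ 2) + x / lam ^ 2 := by
        rw [← hLxℓ]; ring
      have h4 : x / ℓ ^ 2 ≤ x / 49 := by
        apply div_le_div_of_nonneg_left hx0.le (by norm_num) hℓsq
      have : (3 : ℝ) * b + J * b = (3 + (J : ℝ)) * b := by ring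
      rw [this]
      calc (3 + (J : ℝ)) * b ≤ 4 * (x / ℓ ^ 2) + x / lam ^ 2 := by linarith
        _ ≤ 4 * (x / 49) + x / 4 := by linarith
        _ < x / 3 := by linarith
        _ < (cs : ℝ) := hcsgt
    have hkeyN : 3 * b + J * b < cs := by exact_mod_cast hkey
    obtain ⟨e, heA, hecs, hcse, hcard⟩ := chain cs hcsA step J hkeyN
    -- the chain set is contained in the counted set
    have hsub : {c : ℕ | c ∈ A ∧ e ≤ c ∧ c ≤ cs} ⊆ {a : ℕ | a ∈ A ∧ (a : ℝ) ≤ x} := by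
      intro c hc
      refine ⟨hc.1, ?_⟩
      have : (c : ℝ) ≤ (cs : ℝ) := by exact_mod_cast hc.2.2
      linarith
    have hfinx : {a : ℕ | a ∈ A ∧ (a : ℝ) ≤ x}.Finite := by
      apply (Set.finite_Iic (Nat.floor x)).subset
      intro c hc
      exact Nat.le_floor hc.2
    have hle : Set.ncard {c : ℕ | c ∈ A ∧ e ≤ c ∧ c ≤ cs} ≤ countLe A x :=
      Set.ncard_le_ncard hsub hfinx
    have hcountJ : (J : ℝ) + 1 ≤ (countLe A x : ℝ) := by
      have : ((J + 1 : ℕ) : ℝ) ≤ ((countLe A x : ℕ) : ℝ) := by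
        exact_mod_cast le_trans hcard hle
      push_cast at this
      linarith
    linarith
  -- take the minimal good element
  set a : ℕ := Nat.find hex with hadef
  obtain ⟨haA, h3a, haxb, hgap⟩ := Nat.find_spec hex
  refine ⟨a, haA, h3a, haxb, hgap, ?_⟩
  -- predecessor structure
  obtain ⟨d₁, hd₁A, hd₁1, hd₁2⟩ := hdens b hab
  have hd₁a : d₁ < a := by omega
  have hPfin : {c : ℕ | c ∈ A ∧ b < c ∧ c < a}.Finite :=
    (Set.finite_Iic a).subset fun c hc => le_of_lt hc.2.2
  obtain ⟨p, hpP, hpmax⟩ := set_max hPfin ⟨d₁, hd₁A, hd₁1, hd₁a⟩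
  obtain ⟨hpA, hbp, hpa⟩ := hpP
  -- a ≤ 2p by density
  have ha2p : a ≤ 2 * p := by
    obtain ⟨w, hwA, hw1, hw2⟩ := hdens p (by omega)
    have : a ≤ w := by
      by_contra hcon
      push_neg at hcon
      have := hpmax w ⟨hwA, by omega, hcon⟩
      omega
    omega
  -- minimality: every element in (3b, a) has a close predecessor
  have step2 : ∀ c ∈ A, 3 * b < c → c ≤ p → ∃ d ∈ A, c - b ≤ d ∧ d < c := by
    intro c hcA h3 hcp
    by_contra hstep
    push_neg at hstep
    have hca : c < a := by omega
    have hcx : (c : ℝ) + b < x := by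
      have h1 : (c : ℝ) ≤ (a : ℝ) := by exact_mod_cast le_of_lt hca
      linarith
    exact Nat.find_min hex hca ⟨hcA, h3, hcx, fun d hd h1 h2 => by have := hstep d hd h1; omega⟩
  set T : Set ℕ := {c : ℕ | c ∈ A ∧ b < c ∧ c ≤ a + b} with hTdef
  have hTfin : T.Finite := (Set.finite_Iic (a + b)).subset fun c hc => hc.2.2
  have haT : a ∈ T := ⟨haA, by omega, by omega⟩
  have hd₁T : d₁ ∈ T := ⟨hd₁A, hd₁1, by omega⟩
  have hN2b : (0 : ℝ) < 2 * (b : ℝ) := by linarith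
  rcases le_or_gt p (3 * b) with hsmall | hbig
  · -- small cases: p ≤ 3b, so a ≤ 6b
    rcases le_or_gt p (2 * b) with h2b | h2b
    · -- N ≥ 2 suffices
      have hpair : ({d₁, a} : Set ℕ) ⊆ T := by
        rintro c (rfl | rfl)
        · exact hd₁T
        · exact haT
      have hcard2 : Set.ncard ({d₁, a} : Set ℕ) = 2 :=
        Set.ncard_pair (by omega)
      have hge : 2 ≤ Set.ncard T := by
        have := Set.ncard_le_ncard hpair hTfin
        omega
      have hgeR : (2 : ℝ) ≤ (Set.ncard T : ℝ) := by exact_mod_cast hge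
      rw [sub_le_iff_le_add, div_le_iff₀ hN2b]
      have h1 : (a : ℝ) ≤ 2 * (p : ℝ) := by exact_mod_cast ha2p
      have h2 : (p : ℝ) ≤ 2 * (b : ℝ) := by exact_mod_cast h2b
      nlinarith
    · -- N ≥ 3 suffices
      have hpT : p ∈ T := ⟨hpA, hbp, by omega⟩
      have htriple : ({d₁, p, a} : Set ℕ) ⊆ T := by
        rintro c (rfl | rfl | rfl)
        · exact hd₁T
        · exact hpT
        · exact haT
      have hcard3 : Set.ncard ({d₁, p, a} : Set ℕ) = 3 := by
        rw [Set.ncard_insert_of_notMem (by simp; omega) ((Set.finite_singleton _).insert _),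
          Set.ncard_pair (by omega)]
      have hge : 3 ≤ Set.ncard T := by
        have := Set.ncard_le_ncard htriple hTfin
        omega
      have hgeR : (3 : ℝ) ≤ (Set.ncard T : ℝ) := by exact_mod_cast hge
      rw [sub_le_iff_le_add, div_le_iff₀ hN2b]
      have h1 : (a : ℝ) ≤ 2 * (p : ℝ) := by exact_mod_cast ha2p
      have h2 : (p : ℝ) ≤ 3 * (b : ℝ) := by exact_mod_cast hsmall
      nlinarith
  · -- main case: p > 3b, use the chain
    obtain ⟨j, K, hjK, hjpK, hj4K⟩ := exists_j hb1 hbig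
    have hjp : 3 * b + j * b < p := by rw [hjK]; omega
    obtain ⟨e, heA, hep, hpe, hcard⟩ := chain p hpA step2 j hjp
    rw [hjK] at hpe
    have he3 : 3 * b < e := by omega
    obtain ⟨d, hdA, hde, hdlt⟩ := step2 e heA he3 hep
    have hd2b : 2 * b < d := by omega
    -- counting: T contains insert d₁ (insert d (insert a C))
    set C : Set ℕ := {c : ℕ | c ∈ A ∧ e ≤ c ∧ c ≤ p} with hCdef
    have hCfin : C.Finite := (Set.finite_Iic p).subset fun c hc => hc.2.2
    have haC : a ∉ C := fun hc => by have := hc.2.2; omega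
    have hdC : d ∉ insert a C := by
      rintro (rfl | hc)
      · omega
      · have := hc.2.1; omega
    have hd₁C : d₁ ∉ insert d (insert a C) := by
      rintro (rfl | rfl | hc)
      · omega
      · omega
      · have := hc.2.1; omega
    have hsubT : insert d₁ (insert d (insert a C)) ⊆ T := by
      rintro c (rfl | rfl | rfl | hc)
      · exact hd₁T
      · exact ⟨hdA, by omega, by omega⟩
      · exact haT
      · exact ⟨hc.1, by have := hc.2.1; omega, by have := hc.2.2; omega⟩
    have hc1 : Set.ncard (insert a C) = Set.ncard C + 1 :=
      Set.ncard_insert_of_notMem haC hCfin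
    have hc2 : Set.ncard (insert d (insert a C)) = Set.ncard C + 2 := by
      rw [Set.ncard_insert_of_notMem hdC (hCfin.insert a), hc1]
    have hc3 : Set.ncard (insert d₁ (insert d (insert a C))) = Set.ncard C + 3 := by
      rw [Set.ncard_insert_of_notMem hd₁C ((hCfin.insert a).insert d), hc2]
    have hge : j + 4 ≤ Set.ncard T := by
      have h1 := Set.ncard_le_ncard hsubT hTfin
      omega
    -- final real inequality
    have hgeR : ((j : ℝ) + 4) ≤ (Set.ncard T : ℝ) := by exact_mod_cast hge
    have h1 : (a : ℝ) ≤ 2 * (p : ℝ) := by exact_mod_cast ha2p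
    have h2 : (p : ℝ) ≤ ((j : ℝ) + 4) * (b : ℝ) := by
      have hnat : p ≤ j * b + 4 * b := by rw [hjK]; omega
      have : ((p : ℕ) : ℝ) ≤ ((j * b + 4 * b : ℕ) : ℝ) := by exact_mod_cast hnat
      push_cast at this
      linarith
    rw [sub_le_iff_le_add, div_le_iff₀ hN2b]
    nlinarith [mul_le_mul_of_nonneg_right (le_trans (by linarith : (j : ℝ) + 4 ≤ (Set.ncard T : ℝ)) (le_refl _)) hbRpos.le]
end

section
/- Let G be a simple graph on a finite vertex set V. If G contains no nontrivial even closed walk, then the number of edges of G is at most the number of vertices of G, i.e. |E(G)| ≤ |V(G)|. -/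
/-- A nontrivial even closed walk in a simple graph: a closed walk of positive even
length such that at least one edge occurs exactly once in its edge sequence and
every edge occurs at most twice in that edge sequence. -/
def IsNontrivialEvenClosedWalk {V : Type*} [DecidableEq V] {G : SimpleGraph V}
    {v : V} (w : G.Walk v v) : Prop :=
  0 < w.length ∧ Even w.length ∧
    (∃ e ∈ w.edges, w.edges.count e = 1) ∧
    (∀ e ∈ w.edges, w.edges.count e ≤ 2)

/-!
A connected graph with at least as many edges as vertices is not a tree, so it has a cycle;
if it has more edges than vertices, deleting an edge `e` of that cycle leaves a connected graph
which again contains a cycle, one avoiding `e`. An even cycle is itself a nontrivial even closed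
walk. If both cycles are odd, join them by a shortest path `p`: the closed walk around the
first cycle, along `p`, around the second cycle and back along `p` has even length, uses `e`
once and no edge more than twice. A disconnected graph splits into a set of vertices closed
under adjacency and its complement, and the bound follows by induction on the number of
vertices.
-/

namespace SimpleGraph

variable {V : Type*} {G : SimpleGraph V}

def HasNontrivialEvenClosedWalk [DecidableEq V] (G : SimpleGraph V) : Prop :=
  ∃ (v : V) (w : G.Walk v v), IsNontrivialEvenClosedWalk w

namespace Walk

lemma isNontrivialEvenClosedWalk_of_count [DecidableEq V] {u : V} {w : G.Walk u u}
    (hpos : 0 < w.length) (heven : Even w.length) {e : Sym2 V} (he : w.edges.count e = 1)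
    (hle : ∀ e, w.edges.count e ≤ 2) : IsNontrivialEvenClosedWalk w :=
  ⟨hpos, heven, ⟨e, List.count_pos_iff.mp (by omega), he⟩, fun e _ ↦ hle e⟩

lemma IsCycle.isNontrivialEvenClosedWalk [DecidableEq V] {u : V} {c : G.Walk u u}
    (hc : c.IsCycle) (heven : Even c.length) : IsNontrivialEvenClosedWalk c := by
  have hlen := hc.three_le_length
  obtain ⟨e, he⟩ := List.exists_mem_of_length_pos (l := c.edges) (by rw [length_edges]; omega)
  refine isNontrivialEvenClosedWalk_of_count (by omega) heven
    (List.count_eq_one_of_mem hc.edges_nodup he) fun e ↦ ?_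
  exact (List.nodup_iff_count_le_one.mp hc.edges_nodup e).trans one_le_two

lemma disjoint_edges_of_forall_mem_support {u v u' v' x : V} {p : G.Walk u v}
    {q : G.Walk u' v'} (h : ∀ y ∈ p.support, y ∈ q.support → y = x) :
    p.edges.Disjoint q.edges := by
  intro e hp hq
  induction e using Sym2.ind with
  | _ y z =>
    have hy := h y (p.fst_mem_support_of_mem_edges hp) (q.fst_mem_support_of_mem_edges hq)
    have hz := h z (p.snd_mem_support_of_mem_edges hp) (q.snd_mem_support_of_mem_edges hq)
    exact G.ne_of_adj (p.adj_of_mem_edges hp) (hy.trans hz.symm)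

end Walk

open Walk

lemma _root_.IsNontrivialEvenClosedWalk.map [DecidableEq V] {W : Type*} [DecidableEq W]
    {G' : SimpleGraph W} (f : G ↪g G') {u : V} {w : G.Walk u u}
    (hw : IsNontrivialEvenClosedWalk w) : IsNontrivialEvenClosedWalk (w.map f.toHom) := by
  obtain ⟨hpos, heven, ⟨e, he, he₁⟩, hle⟩ := hw
  have hcount (e : Sym2 V) : (w.map f.toHom).edges.count (Sym2.map f e) = w.edges.count e := by
    rw [edges_map]
    exact List.count_map_of_injective _ _ (Sym2.map.injective f.injective) e
  refine ⟨by simpa, by simpa, ⟨Sym2.map f e, ?_, by rw [hcount, he₁]⟩, ?_⟩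
  · rw [edges_map]
    exact List.mem_map_of_mem he
  · intro e' he'
    rw [edges_map] at he'
    obtain ⟨e, he, rfl⟩ := List.mem_map.mp he'
    exact (hcount e).trans_le (hle e he)

lemma HasNontrivialEvenClosedWalk.map [DecidableEq V] {W : Type*} [DecidableEq W]
    {G' : SimpleGraph W} (f : G ↪g G') (h : G.HasNontrivialEvenClosedWalk) :
    G'.HasNontrivialEvenClosedWalk :=
  let ⟨v, w, hw⟩ := h
  ⟨f v, w.map f.toHom, hw.map f⟩

lemma Preconnected.exists_isPath_meeting_only_at_ends (hG : G.Preconnected) {A B : Set V}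
    {a b : V} (ha : a ∈ A) (hb : b ∈ B) :
    ∃ u ∈ A, ∃ v ∈ B, ∃ p : G.Walk u v, p.IsPath ∧
      (∀ x ∈ p.support, x ∈ A → x = u) ∧ (∀ x ∈ p.support, x ∈ B → x = v) := by
  classical
  have hex : ∃ n, ∃ u ∈ A, ∃ v ∈ B, ∃ p : G.Walk u v, p.IsPath ∧ p.length = n :=
    let ⟨p, hp⟩ := (hG a b).exists_isPath
    ⟨_, a, ha, b, hb, p, hp, rfl⟩
  obtain ⟨u, hu, v, hv, p, hp, hlen⟩ := Nat.find_spec hex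
  refine ⟨u, hu, v, hv, p, hp, fun x hx hxA ↦ ?_, fun x hx hxB ↦ ?_⟩
  · by_contra hxu
    exact Nat.find_min hex (hlen ▸ length_dropUntil_lt_length hx hxu)
      ⟨x, hxA, v, hv, _, hp.dropUntil hx, rfl⟩
  · by_contra hxv
    exact Nat.find_min hex (hlen ▸ length_takeUntil_lt_length hx hxv)
      ⟨u, hu, x, hxB, _, hp.takeUntil hx, rfl⟩

lemma Preconnected.hasNontrivialEvenClosedWalk_of_isCycle [DecidableEq V] (hG : G.Preconnected)
    {a b : V} {c₁ : G.Walk a a} {c₂ : G.Walk b b} (h₁ : c₁.IsCycle) (h₂ : c₂.IsCycle)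
    {e : Sym2 V} (he₁ : e ∈ c₁.edges) (he₂ : e ∉ c₂.edges) : G.HasNontrivialEvenClosedWalk := by
  rcases Nat.even_or_odd c₁.length with heven₁ | hodd₁
  · exact ⟨a, c₁, h₁.isNontrivialEvenClosedWalk heven₁⟩
  rcases Nat.even_or_odd c₂.length with heven₂ | hodd₂
  · exact ⟨b, c₂, h₂.isNontrivialEvenClosedWalk heven₂⟩
  obtain ⟨u, hu, v, hv, p, hp, hpu, hpv⟩ := hG.exists_isPath_meeting_only_at_ends
    (A := {x | x ∈ c₁.support}) (B := {x | x ∈ c₂.support})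
    c₁.start_mem_support c₂.start_mem_support
  have hd₁ : p.edges.Disjoint c₁.edges := disjoint_edges_of_forall_mem_support hpu
  have hd₂ : p.edges.Disjoint c₂.edges := disjoint_edges_of_forall_mem_support hpv
  -- Both cycles are odd: go around `c₁`, along `p`, around `c₂` and back along `p`.
  let w := (c₁.rotate u hu).append (p.append ((c₂.rotate v hv).append p.reverse))
  have hcount (f : Sym2 V) :
      w.edges.count f = c₁.edges.count f + c₂.edges.count f + 2 * p.edges.count f := by
    simp only [w, edges_append, edges_reverse, List.count_append, List.count_reverse,
      (c₁.rotate_edges u hu).perm.count_eq, (c₂.rotate_edges v hv).perm.count_eq]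
    omega
  have hlen : w.length = c₁.length + c₂.length + 2 * p.length := by
    simp only [w, length_append, length_reverse, length_rotate]
    omega
  have hle₁ (f : Sym2 V) := List.nodup_iff_count_le_one.mp h₁.edges_nodup f
  have hle₂ (f : Sym2 V) := List.nodup_iff_count_le_one.mp h₂.edges_nodup f
  have hleₚ (f : Sym2 V) := List.nodup_iff_count_le_one.mp hp.isTrail.edges_nodup f
  refine ⟨u, w, isNontrivialEvenClosedWalk_of_count (e := e) ?_ ?_ ?_ fun f ↦ ?_⟩
  · have := h₁.three_le_length
    omega
  · rw [hlen]
    exact (hodd₁.add_odd hodd₂).add (even_two_mul _)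
  · rw [hcount, List.count_eq_one_of_mem h₁.edges_nodup he₁, List.count_eq_zero_of_not_mem he₂,
      List.count_eq_zero_of_not_mem fun hep ↦ hd₁ hep he₁]
  · by_cases hf : f ∈ p.edges
    · rw [hcount, List.count_eq_zero_of_not_mem (hd₁ hf), List.count_eq_zero_of_not_mem (hd₂ hf)]
      linarith [hleₚ f]
    · rw [hcount, List.count_eq_zero_of_not_mem hf]
      linarith [hle₁ f, hle₂ f]

lemma Connected.exists_isCycle_of_card_le [Finite V] (hG : G.Connected)
    (h : Nat.card V ≤ G.edgeSet.ncard) : ∃ (u : V) (c : G.Walk u u), c.IsCycle := by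
  by_contra! hno
  have hT : G.IsTree := ⟨hG, fun u c ↦ hno u c⟩
  have hcard := (isTree_iff_connected_and_card.mp hT).2
  rw [Nat.card_coe_set_eq] at hcard
  omega

lemma Connected.exists_two_isCycle_of_card_lt [Finite V] (hG : G.Connected)
    (h : Nat.card V < G.edgeSet.ncard) :
    ∃ (a b : V) (c₁ : G.Walk a a) (c₂ : G.Walk b b), c₁.IsCycle ∧ c₂.IsCycle ∧
      ∃ e ∈ c₁.edges, e ∉ c₂.edges := by
  obtain ⟨a, c₁, hc₁⟩ := hG.exists_isCycle_of_card_le h.le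
  obtain ⟨e, he⟩ := List.exists_mem_of_length_pos (l := c₁.edges) (by
    have := hc₁.three_le_length
    simp only [length_edges]
    omega)
  induction e using Sym2.ind with
  | _ x y =>
  have hbridge : ¬ G.IsBridge s(x, y) := fun hb ↦ hb.notMem_edges_of_isCycle hc₁ he
  have hcard : (G.deleteEdges {s(x, y)}).edgeSet.ncard + 1 = G.edgeSet.ncard := by
    rw [edgeSet_deleteEdges, Set.ncard_sdiff_singleton_add_one (c₁.edges_subset_edgeSet he)]
  obtain ⟨b, c₂, hc₂⟩ :=
    (hG.connected_delete_edge_of_not_isBridge hbridge).exists_isCycle_of_card_le (by omega)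
  refine ⟨a, b, c₁, c₂.mapLe (deleteEdges_le _), hc₁, hc₂.mapLe _, s(x, y), he, fun he₂ ↦ ?_⟩
  rw [edges_mapLe_eq_edges] at he₂
  simpa [edgeSet_deleteEdges] using c₂.edges_subset_edgeSet he₂

lemma Connected.hasNontrivialEvenClosedWalk_of_card_lt [DecidableEq V] [Finite V]
    (hG : G.Connected) (h : Nat.card V < G.edgeSet.ncard) : G.HasNontrivialEvenClosedWalk :=
  let ⟨_, _, _, _, h₁, h₂, _, he₁, he₂⟩ := hG.exists_two_isCycle_of_card_lt h
  hG.preconnected.hasNontrivialEvenClosedWalk_of_isCycle h₁ h₂ he₁ he₂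

lemma ncard_edgeSet_le_induce_add_induce_compl [Finite V] (S : Set V)
    (hS : ∀ a b, G.Adj a b → a ∈ S → b ∈ S) :
    G.edgeSet.ncard ≤ (G.induce S).edgeSet.ncard + (G.induce Sᶜ).edgeSet.ncard := by
  have hsub : G.edgeSet ⊆ Sym2.map Subtype.val '' (G.induce S).edgeSet ∪
      Sym2.map Subtype.val '' (G.induce Sᶜ).edgeSet := by
    intro e he
    induction e using Sym2.ind with
    | _ a b =>
    have hab : G.Adj a b := he
    by_cases ha : a ∈ S
    · exact .inl ⟨s(⟨a, ha⟩, ⟨b, hS a b hab ha⟩), hab, rfl⟩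
    · exact .inr ⟨s(⟨a, ha⟩, ⟨b, fun hb ↦ ha (hS b a hab.symm hb)⟩), hab, rfl⟩
  calc G.edgeSet.ncard
      ≤ (Sym2.map Subtype.val '' (G.induce S).edgeSet ∪
          Sym2.map Subtype.val '' (G.induce Sᶜ).edgeSet).ncard :=
        Set.ncard_le_ncard hsub
    _ ≤ (Sym2.map Subtype.val '' (G.induce S).edgeSet).ncard +
        (Sym2.map Subtype.val '' (G.induce Sᶜ).edgeSet).ncard := Set.ncard_union_le _ _
    _ = (G.induce S).edgeSet.ncard + (G.induce Sᶜ).edgeSet.ncard := by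
        rw [Set.ncard_image_of_injective _ (Sym2.map.injective Subtype.val_injective),
          Set.ncard_image_of_injective _ (Sym2.map.injective Subtype.val_injective)]

end SimpleGraph

open SimpleGraph

theorem stmt_3 (V : Type*) [Fintype V] [DecidableEq V] (G : SimpleGraph V)
    (h : ¬ ∃ (v : V) (w : G.Walk v v), IsNontrivialEvenClosedWalk w) :
    G.edgeSet.ncard ≤ Fintype.card V := by
  induction hn : Fintype.card V using Nat.strong_induction_on generalizing V with
  | _ n ih =>
  classical
  by_cases hG : G.Connected
  · by_contra! hlt
    exact h (hG.hasNontrivialEvenClosedWalk_of_card_lt (by rwa [Nat.card_eq_fintype_card, hn]))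
  by_cases hV : IsEmpty V
  · rw [Set.eq_empty_of_isEmpty G.edgeSet, Set.ncard_empty]
    exact Nat.zero_le _
  obtain ⟨x, y, hxy⟩ : ∃ x y, ¬ G.Reachable x y := by
    simpa [connected_iff, Preconnected, not_isEmpty_iff.mp hV] using hG
  set S : Set V := {z | G.Reachable x z}
  have hS : ∀ a b, G.Adj a b → a ∈ S → b ∈ S := fun a b hab ha ↦ ha.trans hab.reachable
  have hcardS : Fintype.card S < n := hn ▸ Fintype.card_subtype_lt (x := y) hxy
  have hcardSc : Fintype.card ↥Sᶜ < n := hn ▸ Fintype.card_subtype_lt (x := x) (by simp [S])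
  calc G.edgeSet.ncard
      ≤ (G.induce S).edgeSet.ncard + (G.induce Sᶜ).edgeSet.ncard :=
        ncard_edgeSet_le_induce_add_induce_compl S hS
    _ ≤ Fintype.card S + Fintype.card ↥Sᶜ := Nat.add_le_add
        (ih _ hcardS S _ (mt (HasNontrivialEvenClosedWalk.map (Embedding.induce S)) h) rfl)
        (ih _ hcardSc ↥Sᶜ _ (mt (HasNontrivialEvenClosedWalk.map (Embedding.induce Sᶜ)) h) rfl)
    _ = n := by rw [Fintype.card_compl_set]; omega
end

section
/- Let G be a connected simple graph. If G contains no nontrivial even closed walk, then any two cycles of G have the same edge set (i.e., G contains at most one cycle up to the choice of starting point and orientation). -/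
namespace SimpleGraph.Walk

variable {V : Type*} {G : SimpleGraph V}

lemma exists_prefix_meeting_set_only_at_end (T : Set V) {a b : V} (p : G.Walk a b)
    (hb : b ∈ T) :
    ∃ c ∈ T, ∃ q : G.Walk a c, q.support ⊆ p.support ∧ ∀ z ∈ q.support, z ∈ T → z = c := by
  induction p with
  | nil => exact ⟨_, hb, nil, by simp, by simp⟩
  | @cons a a' b hadj p ih =>
    by_cases ha : a ∈ T
    · exact ⟨a, ha, nil, by simp, by simp⟩
    obtain ⟨c, hc, q, hsub, hmeet⟩ := ih hb
    refine ⟨c, hc, cons hadj q, ?_, ?_⟩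
    · simpa only [support_cons] using List.cons_subset_cons a hsub
    · rintro z hz hzT
      rcases List.mem_cons.mp (support_cons hadj q ▸ hz) with rfl | hz
      · exact absurd hzT ha
      · exact hmeet z hz hzT

lemma exists_isPath_meeting_sets_only_at_ends (S T : Set V) {a b : V} (p : G.Walk a b)
    (ha : a ∈ S) (hb : b ∈ T) :
    ∃ x ∈ S, ∃ y ∈ T, ∃ q : G.Walk x y, q.IsPath ∧
      (∀ z ∈ q.support, z ∈ S → z = x) ∧ (∀ z ∈ q.support, z ∈ T → z = y) := by
  classical
  obtain ⟨y, hy, q₁, -, hq₁T⟩ := exists_prefix_meeting_set_only_at_end T p hb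
  obtain ⟨x, hx, q₂, hq₂sub, hq₂S⟩ :=
    exists_prefix_meeting_set_only_at_end S q₁.reverse (by simpa using ha)
  have hsub : q₂.reverse.bypass.support ⊆ q₂.support := fun z hz => by
    simpa using q₂.reverse.support_bypass_subset_support hz
  refine ⟨x, hx, y, hy, q₂.reverse.bypass, bypass_isPath _,
    fun z hz hzS => hq₂S z (hsub hz) hzS, fun z hz hzT => hq₁T z ?_ hzT⟩
  simpa using hq₂sub (hsub hz)

lemma notMem_edges_of_support_meets_at {x y u v c : V} {q : G.Walk x y} {w : G.Walk u v}
    (hmeet : ∀ z ∈ q.support, z ∈ w.support → z = c) {e : Sym2 V} (he : e ∈ q.edges) :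
    e ∉ w.edges := by
  induction e with
  | h z z' =>
    intro hew
    have hne : z ≠ z' := (q.adj_of_mem_edges he).ne
    have hz := hmeet z (q.fst_mem_support_of_mem_edges he) (w.fst_mem_support_of_mem_edges hew)
    have hz' := hmeet z' (q.snd_mem_support_of_mem_edges he) (w.snd_mem_support_of_mem_edges hew)
    exact hne (hz.trans hz'.symm)

variable [DecidableEq V]

lemma IsTrail.isNontrivialEvenClosedWalk {v : V} {w : G.Walk v v} (hw : w.IsTrail)
    (hpos : 0 < w.length) (heven : Even w.length) : IsNontrivialEvenClosedWalk w := by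
  have hne : w.edges ≠ [] := by
    rw [← List.length_pos_iff, length_edges]
    exact hpos
  obtain ⟨e, he⟩ := List.exists_mem_of_ne_nil _ hne
  exact ⟨hpos, heven, ⟨e, he, hw.count_edges_eq_one he⟩,
    fun e _ => (hw.count_edges_le_one e).trans one_le_two⟩

lemma IsCycle.odd_length {v : V} {w : G.Walk v v} (hw : w.IsCycle)
    (h : ¬ ∃ (v : V) (w : G.Walk v v), IsNontrivialEvenClosedWalk w) : Odd w.length :=
  Nat.not_even_iff_odd.mp fun heven =>
    h ⟨v, w, hw.isTrail.isNontrivialEvenClosedWalk (by have := hw.three_le_length; omega) heven⟩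

lemma isNontrivialEvenClosedWalk_append_bridge {x y : V} {c₁ : G.Walk x x} {c₂ : G.Walk y y}
    {q : G.Walk x y} (hc₁ : c₁.IsTrail) (hc₂ : c₂.IsTrail) (hq : q.IsTrail)
    (hodd₁ : Odd c₁.length) (hodd₂ : Odd c₂.length)
    (hq₁ : ∀ e ∈ q.edges, e ∉ c₁.edges) (hq₂ : ∀ e ∈ q.edges, e ∉ c₂.edges)
    {e : Sym2 V} (he₁ : e ∈ c₁.edges) (he₂ : e ∉ c₂.edges) :
    IsNontrivialEvenClosedWalk (c₁.append (q.append (c₂.append q.reverse))) := by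
  have hcount : ∀ f : Sym2 V, (c₁.append (q.append (c₂.append q.reverse))).edges.count f =
      c₁.edges.count f + q.edges.count f + c₂.edges.count f + q.edges.count f := by
    intro f
    simp only [edges_append, edges_reverse, List.count_append, List.count_reverse]
    ring
  obtain ⟨k₁, hk₁⟩ := hodd₁
  obtain ⟨k₂, hk₂⟩ := hodd₂
  refine ⟨?_, ?_, ⟨e, ?_, ?_⟩, fun f _ => ?_⟩
  · simp only [length_append, length_reverse]
    omega
  · simp only [length_append, length_reverse, hk₁, hk₂]
    exact ⟨k₁ + k₂ + q.length + 1, by ring⟩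
  · simp [he₁]
  · rw [hcount, hc₁.count_edges_eq_one he₁, List.count_eq_zero.mpr (fun h => hq₁ e h he₁),
      List.count_eq_zero.mpr he₂]
  · rw [hcount]
    have := hc₁.count_edges_le_one f
    have := hc₂.count_edges_le_one f
    by_cases hf : f ∈ q.edges
    · rw [List.count_eq_zero.mpr (hq₁ f hf), List.count_eq_zero.mpr (hq₂ f hf),
        hq.count_edges_eq_one hf]
    · rw [List.count_eq_zero.mpr hf]
      omega

end SimpleGraph.Walk

open SimpleGraph.Walk in
lemma SimpleGraph.Connected.mem_edges_of_isCycle {V : Type*} [DecidableEq V] {G : SimpleGraph V}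
    (hG : G.Connected) (h : ¬ ∃ (v : V) (w : G.Walk v v), IsNontrivialEvenClosedWalk w)
    {u v : V} {w₁ : G.Walk u u} {w₂ : G.Walk v v} (h₁ : w₁.IsCycle) (h₂ : w₂.IsCycle)
    {e : Sym2 V} (he : e ∈ w₁.edges) : e ∈ w₂.edges := by
  by_contra he₂
  obtain ⟨x, hx, y, hy, q, hq, hqx, hqy⟩ := exists_isPath_meeting_sets_only_at_ends
    {z | z ∈ w₁.support} {z | z ∈ w₂.support} (hG.preconnected u v).some
    w₁.start_mem_support w₂.start_mem_support
  have hperm₁ := (w₁.rotate_edges x hx).perm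
  have hperm₂ := (w₂.rotate_edges y hy).perm
  refine h ⟨x, _, isNontrivialEvenClosedWalk_append_bridge (h₁.isTrail.rotate hx)
    (h₂.isTrail.rotate hy) hq.isTrail ?_ ?_ ?_ ?_ (hperm₁.mem_iff.mpr he)
    (hperm₂.mem_iff.not.mpr he₂)⟩
  · simpa using h₁.odd_length h
  · simpa using h₂.odd_length h
  · exact fun f hf => hperm₁.mem_iff.not.mpr (notMem_edges_of_support_meets_at hqx hf)
  · exact fun f hf => hperm₂.mem_iff.not.mpr (notMem_edges_of_support_meets_at hqy hf)

theorem stmt_4 {V : Type*} [DecidableEq V] (G : SimpleGraph V) (hG : G.Connected)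
    (h : ¬ ∃ (v : V) (w : G.Walk v v), IsNontrivialEvenClosedWalk w) :
    ∀ (u v : V) (w₁ : G.Walk u u) (w₂ : G.Walk v v),
      w₁.IsCycle → w₂.IsCycle → {e | e ∈ w₁.edges} = {e | e ∈ w₂.edges} :=
  fun _ _ _ _ h₁ h₂ => Set.Subset.antisymm (fun _ => hG.mem_edges_of_isCycle h h₁ h₂)
    (fun _ => hG.mem_edges_of_isCycle h h₂ h₁)
end

section
/- Let a₁, a₂, …, a_m be positive integers satisfying a_{i+1} > 3·a_i for all 1 ≤ i ≤ m − 1, and let x₁, x₂, …, x_m be integers with |x_i| ≤ 2 for all i. If x₁·a₁ + x₂·a₂ + ⋯ + x_m·a_m = 0, then x_i = 0 for every i. -/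
lemma aux_sum_lt (N : ℕ) (A : ℕ → ℤ) (hA : ∀ i < N, 0 < A i)
    (hg : ∀ i, i + 1 < N → 3 * A i < A (i + 1)) :
    ∀ n < N, 2 * ∑ i ∈ Finset.range n, A i < A n := by
  intro n
  induction n with
  | zero => intro hn; simpa using hA 0 hn
  | succ k ih =>
    intro hk
    have h1 : 2 * ∑ i ∈ Finset.range k, A i < A k := ih (by omega)
    have h2 : 3 * A k < A (k + 1) := hg k hk
    rw [Finset.sum_range_succ]
    linarith

lemma aux_main (n : ℕ) (A X : ℕ → ℤ) (hA : ∀ i < n, 0 < A i)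
    (hg : ∀ i, i + 1 < n → 3 * A i < A (i + 1))
    (hX : ∀ i, |X i| ≤ 2)
    (hsum : ∑ i ∈ Finset.range n, X i * A i = 0) :
    ∀ i < n, X i = 0 := by
  induction n with
  | zero => intro i hi; omega
  | succ k ih =>
    rw [Finset.sum_range_succ] at hsum
    have hXk : X k = 0 := by
      by_contra h
      have h1 : 1 ≤ |X k| := by
        rcases abs_pos.mpr h with hp; omega
      have hAk : 0 < A k := hA k (by omega)
      have hbound : |∑ i ∈ Finset.range k, X i * A i| ≤
          2 * ∑ i ∈ Finset.range k, A i := by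
        calc |∑ i ∈ Finset.range k, X i * A i|
            ≤ ∑ i ∈ Finset.range k, |X i * A i| := Finset.abs_sum_le_sum_abs _ _
          _ ≤ ∑ i ∈ Finset.range k, 2 * A i := by
              apply Finset.sum_le_sum
              intro i hi
              rw [abs_mul, abs_of_pos (hA i (by
                simp only [Finset.mem_range] at hi; omega))]
              exact mul_le_mul_of_nonneg_right (hX i) (le_of_lt (hA i (by
                simp only [Finset.mem_range] at hi; omega)))
          _ = 2 * ∑ i ∈ Finset.range k, A i := by rw [Finset.mul_sum]
      have hlt : 2 * ∑ i ∈ Finset.range k, A i < A k :=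
        aux_sum_lt (k + 1) A hA hg k (by omega)
      have heq : ∑ i ∈ Finset.range k, X i * A i = -(X k * A k) := by linarith
      have : |X k * A k| ≤ 2 * ∑ i ∈ Finset.range k, A i := by
        rw [heq, abs_neg] at hbound; exact hbound
      rw [abs_mul, abs_of_pos hAk] at this
      nlinarith
    have hsum' : ∑ i ∈ Finset.range k, X i * A i = 0 := by
      rw [hXk] at hsum; linarith
    have ihr := ih (fun i hi => hA i (by omega)) (fun i hi => hg i (by omega)) hsum'
    intro i hi
    rcases Nat.lt_succ_iff_lt_or_eq.mp hi with h | h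
    · exact ihr i h
    · rw [h]; exact hXk

theorem stmt_5 (m : ℕ) (a : Fin m → ℕ) (x : Fin m → ℤ)
    (hpos : ∀ i, 0 < a i)
    (hgrow : ∀ i j : Fin m, (j : ℕ) = (i : ℕ) + 1 → 3 * (a i : ℤ) < (a j : ℤ))
    (hx : ∀ i, |x i| ≤ 2)
    (hsum : ∑ i, x i * (a i : ℤ) = 0) :
    ∀ i, x i = 0 := by
  set A : ℕ → ℤ := fun i => if h : i < m then (a ⟨i, h⟩ : ℤ) else 1 with hAdef
  set X : ℕ → ℤ := fun i => if h : i < m then x ⟨i, h⟩ else 0 with hXdef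
  have hA : ∀ i < m, 0 < A i := by
    intro i hi; simp only [hAdef, dif_pos hi]
    exact_mod_cast hpos ⟨i, hi⟩
  have hg : ∀ i, i + 1 < m → 3 * A i < A (i + 1) := by
    intro i hi
    simp only [hAdef, dif_pos (by omega : i < m), dif_pos hi]
    exact hgrow ⟨i, by omega⟩ ⟨i + 1, hi⟩ rfl
  have hX : ∀ i, |X i| ≤ 2 := by
    intro i; simp only [hXdef]
    split
    · exact hx _
    · simp
  have hsum' : ∑ i ∈ Finset.range m, X i * A i = 0 := by
    rw [← Fin.sum_univ_eq_sum_range (fun i => X i * A i) m, ← hsum]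
    apply Finset.sum_congr rfl
    intro i _
    simp only [hAdef, hXdef, dif_pos i.isLt]
  intro i
  have := aux_main m A X hA hg hX hsum' i i.isLt
  simpa only [hXdef, dif_pos i.isLt] using this
end
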